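/- For any s ≤ 0 and m ≤ 0, R(D_{s,m}, C_{s,m}) = s D_{s,m} + m C_{s,m} + min over conditional pmfs P_{T|X}, pmfs Q_{T,Y} on 𝒯 × 𝒴 and pmfs Q_A on 𝒜 of F(P_{T|X}, Q_{T,Y}, Q_A); that is, the minimum of F over all three arguments equals the minimum over P_{T|X} of I(X;a(T)) + I(X;T|Y,a(T)) − s E[d(X,T(Y))] − m E[Δ(a(T))]. -/

import Mathlib

open Finset

noncomputable section

/-- A probability mass function on a finite alphabet. -/
def IsPMF {α : Type} [Fintype α] (p : α → ℝ) : Prop :=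
  (∀ a, 0 ≤ p a) ∧ ∑ a, p a = 1

/-- A conditional probability mass function. -/
def IsCondPMF {α β : Type} [Fintype α] [Fintype β] (p : α → β → ℝ) : Prop :=
  ∀ a, IsPMF (p a)

/-- A Shannon strategy: an estimate function `Y → Xh` together with an action in `A`. -/
abbrev Strat (Y Xh A : Type) : Type := (Y → Xh) × A

variable {X Y A Xh : Type} [Fintype X] [Fintype Y] [Fintype A] [Fintype Xh]
  [DecidableEq X] [DecidableEq Y] [DecidableEq A] [DecidableEq Xh]


/-- Joint pmf `P_{X,Y,T}(x,y,t) = P_X(x) P_{T|X}(t|x) P_{Y|X,A}(y|x,a(t))`. -/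
def pXYT (PX : X → ℝ) (PW : A → X → Y → ℝ) (PT : X → Strat Y Xh A → ℝ)
    (x : X) (y : Y) (t : Strat Y Xh A) : ℝ :=
  PX x * PT x t * PW t.2 x y

/-- Action marginal `P_A`. -/
def pA (PX : X → ℝ) (PT : X → Strat Y Xh A → ℝ) (a : A) : ℝ :=
  ∑ x, ∑ t, if t.2 = a then PX x * PT x t else 0

/-- Marginal `P_{X,A}`. -/
def pXA (PX : X → ℝ) (PT : X → Strat Y Xh A → ℝ) (x : X) (a : A) : ℝ :=
  ∑ t, if t.2 = a then PX x * PT x t else 0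

/-- Marginal `P_{Y,A}`. -/
def pYA (PX : X → ℝ) (PW : A → X → Y → ℝ) (PT : X → Strat Y Xh A → ℝ)
    (y : Y) (a : A) : ℝ :=
  ∑ x, ∑ t, if t.2 = a then pXYT PX PW PT x y t else 0

/-- Marginal `P_{X,Y,A}`. -/
def pXYA (PX : X → ℝ) (PW : A → X → Y → ℝ) (PT : X → Strat Y Xh A → ℝ)
    (x : X) (y : Y) (a : A) : ℝ :=
  ∑ t, if t.2 = a then pXYT PX PW PT x y t else 0

/-- Marginal `P_{Y,T}`. -/
def pYT (PX : X → ℝ) (PW : A → X → Y → ℝ) (PT : X → Strat Y Xh A → ℝ)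
    (y : Y) (t : Strat Y Xh A) : ℝ :=
  ∑ x, pXYT PX PW PT x y t

/-- Mutual information `I(X; a(T))` (base-2 logarithms). -/
def IXA (PX : X → ℝ) (PT : X → Strat Y Xh A → ℝ) : ℝ :=
  ∑ x, ∑ a, pXA PX PT x a * Real.logb 2 (pXA PX PT x a / (PX x * pA PX PT a))

/-- Conditional mutual information `I(X; T | Y, a(T))` (base-2 logarithms). -/
def IXTcondYA (PX : X → ℝ) (PW : A → X → Y → ℝ) (PT : X → Strat Y Xh A → ℝ) : ℝ :=
  ∑ x, ∑ y, ∑ t, pXYT PX PW PT x y t *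
    Real.logb 2 (pXYT PX PW PT x y t * pYA PX PW PT y t.2 /
      (pXYA PX PW PT x y t.2 * pYT PX PW PT y t))

/-- Average distortion `E[d(X, T(Y))]`. -/
def expDist (PX : X → ℝ) (PW : A → X → Y → ℝ) (dist : X → Xh → ℝ)
    (PT : X → Strat Y Xh A → ℝ) : ℝ :=
  ∑ x, ∑ y, ∑ t, pXYT PX PW PT x y t * dist x (t.1 y)

/-- Average action cost `E[Δ(a(T))]`. -/
def expCost (PX : X → ℝ) (cost : A → ℝ) (PT : X → Strat Y Xh A → ℝ) : ℝ :=
  ∑ x, ∑ t, PX x * PT x t * cost t.2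

/-- The rate-distortion-cost function in the Shannon-strategy formulation. -/
def RDC (PX : X → ℝ) (PW : A → X → Y → ℝ) (dist : X → Xh → ℝ) (cost : A → ℝ)
    (D C : ℝ) : ℝ :=
  sInf { r : ℝ | ∃ PT : X → Strat Y Xh A → ℝ, IsCondPMF PT ∧
    expDist PX PW dist PT ≤ D ∧ expCost PX cost PT ≤ C ∧
    r = IXA PX PT + IXTcondYA PX PW PT }
/-- The Lagrangian functional
`I(X;a(T)) + I(X;T|Y,a(T)) − s E[d(X,T(Y))] − m E[Δ(a(T))]`. -/
def Jfun (PX : X → ℝ) (PW : A → X → Y → ℝ) (dist : X → Xh → ℝ) (cost : A → ℝ)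
    (s m : ℝ) (PT : X → Strat Y Xh A → ℝ) : ℝ :=
  IXA PX PT + IXTcondYA PX PW PT - s * expDist PX PW dist PT - m * expCost PX cost PT

/-- The unconstrained minimum `min_{P_{T|X}} { I(X;a(T)) + I(X;T|Y,a(T)) − s E[d] − m E[Δ] }`. -/
def Jmin (PX : X → ℝ) (PW : A → X → Y → ℝ) (dist : X → Xh → ℝ) (cost : A → ℝ)
    (s m : ℝ) : ℝ :=
  sInf { r : ℝ | ∃ PT : X → Strat Y Xh A → ℝ, IsCondPMF PT ∧
    r = Jfun PX PW dist cost s m PT }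
/-- A single Kullback–Leibler summand `p log₂(p/q)` with the conventions
`0 · log(0/q) = 0` and `p log(p/0) = +∞` for `p > 0`, valued in the extended reals. -/
def klTerm (p q : ℝ) : EReal :=
  if p = 0 then 0 else if q = 0 then ⊤ else ((p * Real.logb 2 (p / q) : ℝ) : EReal)

/-- Conditional joint pmf `P_{Y,T|X}(y,t|x) = P_{T|X}(t|x) P_{Y|X,A}(y|x,a(t))`. -/
def pYTgivenX (PW : A → X → Y → ℝ) (PT : X → Strat Y Xh A → ℝ)
    (x : X) (y : Y) (t : Strat Y Xh A) : ℝ :=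
  PT x t * PW t.2 x y

/-- The Blahut–Arimoto functional
`F(P_{T|X}, Q_{T,Y}, Q_A) = D_KL(P_{Y,A}‖Q_A) − Σ P_{X,Y,T} log₂ P_{Y|X,A}`
`+ Σ_x P_X(x) D_KL(P_{Y,T|X}(·,·|x)‖Q_{T,Y}) − s E[d(X,T(Y))] − m E[Δ(a(T))]`,
valued in the extended reals (base-2 logarithms). -/
def Ffun (PX : X → ℝ) (PW : A → X → Y → ℝ) (dist : X → Xh → ℝ) (cost : A → ℝ)
    (s m : ℝ) (PT : X → Strat Y Xh A → ℝ) (QTY : Strat Y Xh A × Y → ℝ)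
    (QA : A → ℝ) : EReal :=
  (∑ y, ∑ a, klTerm (pYA PX PW PT y a) (QA a))
  + (((- ∑ x, ∑ y, ∑ t, pXYT PX PW PT x y t * Real.logb 2 (PW t.2 x y) : ℝ)) : EReal)
  + (∑ x, ((PX x : ℝ) : EReal) * ∑ t, ∑ y, klTerm (pYTgivenX PW PT x y t) (QTY (t, y)))
  + ((- s * expDist PX PW dist PT - m * expCost PX cost PT : ℝ) : EReal)

/-! With `J(P) = I(X;a(T)) + I(X;T|Y,a(T)) − s E[d] − m E[Δ]`, the functional splits as
`F(P, Q_{T,Y}, Q_A) = J(P) + D(P_A ‖ Q_A) + D(P_{T,Y} ‖ Q_{T,Y})` whenever `Q_A` and `Q_{T,Y}`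
charge the supports of `P_{Y,A}` and `P_{Y,T|X}` (and `F = ⊤` otherwise). By Gibbs' inequality
the inner minimization over `Q_{T,Y}, Q_A` returns `J(P)`, attained at the true marginals, so
`min F = J(P*)` and `P*` minimizes `J`. Since `s, m ≤ 0`, any `P` meeting the distortion and
cost levels of `P*` then has `I(P) = J(P) + s E[d] + m E[Δ] ≥ J(P*) + s D_{s,m} + m C_{s,m}`,
which identifies `R(D_{s,m}, C_{s,m})`. -/

open Finset

set_option linter.unusedSectionVars false

lemma EReal.coe_finset_sum {ι : Type*} (s : Finset ι) (f : ι → ℝ) :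
    ((∑ i ∈ s, f i : ℝ) : EReal) = ∑ i ∈ s, (f i : EReal) :=
  map_sum (⟨⟨(↑), EReal.coe_zero⟩, EReal.coe_add⟩ : ℝ →+ EReal) f s

lemma EReal.sum_ne_bot {ι : Type*} {s : Finset ι} {f : ι → EReal} (h : ∀ i ∈ s, f i ≠ ⊥) :
    ∑ i ∈ s, f i ≠ ⊥ :=
  sum_induction f (· ≠ ⊥) (fun _ _ ha hb => EReal.add_ne_bot_iff.2 ⟨ha, hb⟩)
    EReal.zero_ne_bot h

lemma EReal.sum_eq_top {ι : Type*} [DecidableEq ι] {s : Finset ι} {f : ι → EReal}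
    (h : ∀ i ∈ s, f i ≠ ⊥) {i : ι} (hi : i ∈ s) (hfi : f i = ⊤) : ∑ j ∈ s, f j = ⊤ := by
  rw [← add_sum_erase s f hi, hfi]
  exact EReal.top_add_of_ne_bot (EReal.sum_ne_bot fun j hj => h j (mem_of_mem_erase hj))

lemma EReal.coe_mul_ne_bot {c : ℝ} (hc : 0 < c) {e : EReal} (he : e ≠ ⊥) :
    (c : EReal) * e ≠ ⊥ := by
  simp [EReal.mul_ne_bot, he, hc.le]

def relEntropy {ι : Type*} [Fintype ι] (p q : ι → ℝ) : ℝ :=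
  ∑ i, p i * Real.logb 2 (p i / q i)

lemma relEntropy_self {ι : Type*} [Fintype ι] (p : ι → ℝ) : relEntropy p p = 0 := by
  refine sum_eq_zero fun i _ => ?_
  rcases eq_or_ne (p i) 0 with h | h <;> simp [h]

theorem relEntropy_nonneg {ι : Type*} [Fintype ι] {p q : ι → ℝ} (hp : ∀ i, 0 ≤ p i)
    (hq : ∀ i, 0 ≤ q i) (hsum : ∑ i, q i ≤ ∑ i, p i) (hpq : ∀ i, q i = 0 → p i = 0) :
    0 ≤ relEntropy p q := by
  have hlog2 : 0 < Real.log 2 := Real.log_pos one_lt_two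
  have key : ∀ i, (p i - q i) / Real.log 2 ≤ p i * Real.logb 2 (p i / q i) := by
    intro i
    rcases (hp i).eq_or_lt with h | h
    · simp [← h, div_nonpos_iff, hq i, hlog2.le]
    · have hqi : 0 < q i := (hq i).lt_of_ne' fun h0 => h.ne' (hpq i h0)
      have hlog := Real.one_sub_inv_le_log_of_pos (div_pos h hqi)
      rw [inv_div] at hlog
      rw [Real.logb, mul_div_assoc']
      gcongr
      calc p i - q i = p i * (1 - q i / p i) := by field_simp
        _ ≤ _ := by gcongr
  calc 0 ≤ (∑ i, p i - ∑ i, q i) / Real.log 2 := div_nonneg (sub_nonneg.2 hsum) hlog2.le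
    _ = ∑ i, (p i - q i) / Real.log 2 := by rw [← sum_sub_distrib, sum_div]
    _ ≤ relEntropy p q := sum_le_sum fun i _ => key i

lemma mul_logb_div_eq_add {p q r : ℝ} (hq : p ≠ 0 → q ≠ 0) (hr : p ≠ 0 → r ≠ 0) :
    p * Real.logb 2 (p / q) = p * Real.logb 2 (p / r) + p * Real.logb 2 (r / q) := by
  rcases eq_or_ne p 0 with hp | hp
  · simp [hp]
  · rw [Real.logb_div hp (hq hp), Real.logb_div hp (hr hp), Real.logb_div (hr hp) (hq hp)]
    ring

/- With `x, t, w, a, b, c, e` standing for `P_X(x)`, `P_{T|X}(t|x)`, `P_{Y|X,A}(y|x,a(t))`,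
`P_{X,A}(x,a(t))`, `P_A(a(t))`, `P_{Y,A}(y,a(t))`, `P_{Y,T}(y,t)`, this is the pointwise form of
`I(X;A) + I(X;T|Y,A)` as the three entropy terms of `F` at the true marginals. -/
lemma logb_chain_rule {x t w a b c e : ℝ} (hx : x ≠ 0) (ht : t ≠ 0) (hw : w ≠ 0) (ha : a ≠ 0)
    (hb : b ≠ 0) (hc : c ≠ 0) (he : e ≠ 0) :
    Real.logb 2 (a / (x * b)) + Real.logb 2 (x * t * w * c / (w * a * e))
      = Real.logb 2 (c / b) - Real.logb 2 w + Real.logb 2 (t * w / e) := by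
  simp only [Real.logb_div, Real.logb_mul, mul_ne_zero_iff, ne_eq, *, not_false_eq_true, and_self]
  ring

lemma le_sum_ite_eq {ι β : Type*} [Fintype ι] [DecidableEq β] {f : ι → ℝ} (g : ι → β)
    (hf : ∀ i, 0 ≤ f i) (i : ι) : f i ≤ ∑ j, if g j = g i then f j else 0 := by
  simpa using single_le_sum (f := fun j => if g j = g i then f j else 0)
    (fun j _ => ite_nonneg (hf j) le_rfl) (mem_univ i)

lemma klTerm_ne_bot (p q : ℝ) : klTerm p q ≠ ⊥ := by
  unfold klTerm
  split_ifs
  · exact EReal.zero_ne_bot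
  · exact top_ne_bot
  · exact EReal.coe_ne_bot _

lemma klTerm_eq_coe {p q : ℝ} (h : p ≠ 0 → q ≠ 0) :
    klTerm p q = ((p * Real.logb 2 (p / q) : ℝ) : EReal) := by
  unfold klTerm
  split_ifs with hp hq
  · simp [hp]
  · exact absurd hq (h hp)
  · rfl

lemma klTerm_eq_top {p q : ℝ} (hp : p ≠ 0) (hq : q = 0) : klTerm p q = ⊤ := by
  simp [klTerm, hp, hq]

/-- `P_{T,Y}`, shaped like `Q_{T,Y}`. -/
def pTY (PX : X → ℝ) (PW : A → X → Y → ℝ) (PT : X → Strat Y Xh A → ℝ) :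
    Strat Y Xh A × Y → ℝ :=
  fun p => pYT PX PW PT p.2 p.1

section Marginals

variable {PX : X → ℝ} {PW : A → X → Y → ℝ} {PT : X → Strat Y Xh A → ℝ}

lemma pXYT_eq_mul_pYTgivenX (x : X) (y : Y) (t : Strat Y Xh A) :
    pXYT PX PW PT x y t = PX x * pYTgivenX PW PT x y t := by
  unfold pXYT pYTgivenX; ring

lemma pXYA_eq_mul_pXA (x : X) (y : Y) (a : A) :
    pXYA PX PW PT x y a = PW a x y * pXA PX PT x a := by
  simp only [pXYA, pXA, pXYT, mul_sum, mul_ite, mul_zero]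
  refine sum_congr rfl fun t _ => ?_
  split_ifs with h
  · rw [← h]; ring
  · rfl

lemma sum_pXYT_eq_mul (hPW : ∀ a x, IsPMF (PW a x)) (x : X) (t : Strat Y Xh A) :
    ∑ y, pXYT PX PW PT x y t = PX x * PT x t := by
  simp only [pXYT]
  rw [← mul_sum, (hPW t.2 x).2, mul_one]

lemma sum_pYA_mul (f : Y → A → ℝ) :
    ∑ y, ∑ a, pYA PX PW PT y a * f y a = ∑ x, ∑ y, ∑ t, pXYT PX PW PT x y t * f y t.2 := by
  refine (sum_congr rfl fun y _ => ?_).trans Finset.sum_comm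
  simp only [pYA, sum_mul, ite_mul, zero_mul]
  rw [Finset.sum_comm]
  refine sum_congr rfl fun x _ => ?_
  rw [Finset.sum_comm]
  simp

lemma sum_pXA_mul (hPW : ∀ a x, IsPMF (PW a x)) (f : A → ℝ) (x : X) :
    ∑ a, pXA PX PT x a * f a = ∑ y, ∑ t, pXYT PX PW PT x y t * f t.2 := by
  rw [Finset.sum_comm]
  simp only [pXA, sum_mul, ite_mul, zero_mul]
  rw [Finset.sum_comm]
  refine sum_congr rfl fun t _ => ?_
  simp [← sum_mul, sum_pXYT_eq_mul hPW]

lemma sum_pYA_eq_pA (hPW : ∀ a x, IsPMF (PW a x)) (a : A) :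
    ∑ y, pYA PX PW PT y a = pA PX PT a := by
  simp only [pYA, pA]
  rw [Finset.sum_comm]
  refine sum_congr rfl fun x _ => ?_
  rw [Finset.sum_comm]
  refine sum_congr rfl fun t _ => ?_
  split_ifs
  · exact sum_pXYT_eq_mul hPW x t
  · exact sum_const_zero

lemma sum_sum_mul_eq_one (hPX : IsPMF PX) (hPT : IsCondPMF PT) :
    ∑ x, ∑ t, PX x * PT x t = 1 := by
  simp [← mul_sum, (hPT _).2, hPX.2]

lemma sum_pA (hPX : IsPMF PX) (hPT : IsCondPMF PT) : ∑ a, pA PX PT a = 1 := by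
  simp only [pA]
  rw [Finset.sum_comm, ← sum_sum_mul_eq_one hPX hPT]
  refine sum_congr rfl fun x _ => ?_
  rw [Finset.sum_comm]
  simp

lemma sum_pTY (hPX : IsPMF PX) (hPW : ∀ a x, IsPMF (PW a x)) (hPT : IsCondPMF PT) :
    ∑ p, pTY PX PW PT p = 1 :=
  calc ∑ p, pTY PX PW PT p
      = ∑ t, ∑ x, ∑ y, pXYT PX PW PT x y t := by
        simp only [pTY]
        rw [Fintype.sum_prod_type]
        exact sum_congr rfl fun t _ => Finset.sum_comm
    _ = ∑ x, ∑ t, PX x * PT x t := by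
        rw [Finset.sum_comm]
        simp only [sum_pXYT_eq_mul hPW]
    _ = 1 := sum_sum_mul_eq_one hPX hPT

lemma pXYT_nonneg (hPX : ∀ x, 0 ≤ PX x) (hPW : ∀ a x y, 0 ≤ PW a x y)
    (hPT : ∀ x t, 0 ≤ PT x t) (x : X) (y : Y) (t : Strat Y Xh A) :
    0 ≤ pXYT PX PW PT x y t :=
  mul_nonneg (mul_nonneg (hPX x) (hPT x t)) (hPW t.2 x y)

lemma pXA_nonneg (hPX : ∀ x, 0 ≤ PX x) (hPT : ∀ x t, 0 ≤ PT x t) (x : X) (a : A) :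
    0 ≤ pXA PX PT x a :=
  sum_nonneg fun t _ => ite_nonneg (mul_nonneg (hPX x) (hPT x t)) le_rfl

lemma pA_nonneg (hPX : ∀ x, 0 ≤ PX x) (hPT : ∀ x t, 0 ≤ PT x t) (a : A) :
    0 ≤ pA PX PT a :=
  sum_nonneg fun x _ => pXA_nonneg hPX hPT x a

lemma pYA_nonneg (hPX : ∀ x, 0 ≤ PX x) (hPW : ∀ a x y, 0 ≤ PW a x y)
    (hPT : ∀ x t, 0 ≤ PT x t) (y : Y) (a : A) : 0 ≤ pYA PX PW PT y a :=
  sum_nonneg fun x _ => sum_nonneg fun t _ => ite_nonneg (pXYT_nonneg hPX hPW hPT x y t) le_rfl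

lemma pYT_nonneg (hPX : ∀ x, 0 ≤ PX x) (hPW : ∀ a x y, 0 ≤ PW a x y)
    (hPT : ∀ x t, 0 ≤ PT x t) (y : Y) (t : Strat Y Xh A) : 0 ≤ pYT PX PW PT y t :=
  sum_nonneg fun x _ => pXYT_nonneg hPX hPW hPT x y t

lemma mul_le_pXA (hPX : ∀ x, 0 ≤ PX x) (hPT : ∀ x t, 0 ≤ PT x t) (x : X)
    (t : Strat Y Xh A) : PX x * PT x t ≤ pXA PX PT x t.2 :=
  le_sum_ite_eq Prod.snd (fun t' => mul_nonneg (hPX x) (hPT x t')) t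

lemma pXA_le_pA (hPX : ∀ x, 0 ≤ PX x) (hPT : ∀ x t, 0 ≤ PT x t) (x : X) (a : A) :
    pXA PX PT x a ≤ pA PX PT a :=
  single_le_sum (fun x' _ => pXA_nonneg hPX hPT x' a) (mem_univ x)

lemma pXYT_le_pYA (hPX : ∀ x, 0 ≤ PX x) (hPW : ∀ a x y, 0 ≤ PW a x y)
    (hPT : ∀ x t, 0 ≤ PT x t) (x : X) (y : Y) (t : Strat Y Xh A) :
    pXYT PX PW PT x y t ≤ pYA PX PW PT y t.2 :=
  (le_sum_ite_eq Prod.snd (fun t' => pXYT_nonneg hPX hPW hPT x y t') t).trans <|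
    single_le_sum (f := fun x' => ∑ t', if t'.2 = t.2 then pXYT PX PW PT x' y t' else 0)
      (fun x' _ => sum_nonneg fun t' _ => ite_nonneg (pXYT_nonneg hPX hPW hPT x' y t') le_rfl)
      (mem_univ x)

lemma pXYT_le_pYT (hPX : ∀ x, 0 ≤ PX x) (hPW : ∀ a x y, 0 ≤ PW a x y)
    (hPT : ∀ x t, 0 ≤ PT x t) (x : X) (y : Y) (t : Strat Y Xh A) :
    pXYT PX PW PT x y t ≤ pYT PX PW PT y t :=
  single_le_sum (f := fun x' => pXYT PX PW PT x' y t)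
    (fun x' _ => pXYT_nonneg hPX hPW hPT x' y t) (mem_univ x)

lemma pYA_le_pA (hPX : ∀ x, 0 ≤ PX x) (hPW : ∀ a x, IsPMF (PW a x))
    (hPT : ∀ x t, 0 ≤ PT x t) (y : Y) (a : A) : pYA PX PW PT y a ≤ pA PX PT a := by
  rw [← sum_pYA_eq_pA hPW a]
  exact single_le_sum (f := fun y' => pYA PX PW PT y' a)
    (fun y' _ => pYA_nonneg hPX (fun a x => (hPW a x).1) hPT y' a) (mem_univ y)

lemma pA_ne_zero_of_pYA_ne_zero (hPX : ∀ x, 0 ≤ PX x) (hPW : ∀ a x, IsPMF (PW a x))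
    (hPT : ∀ x t, 0 ≤ PT x t) {y : Y} {a : A} (h : pYA PX PW PT y a ≠ 0) :
    pA PX PT a ≠ 0 :=
  (((pYA_nonneg hPX (fun a x => (hPW a x).1) hPT y a).lt_of_ne' h).trans_le
    (pYA_le_pA hPX hPW hPT y a)).ne'

lemma pYT_ne_zero_of_pYTgivenX_ne_zero (hPX : ∀ x, 0 < PX x) (hPW : ∀ a x y, 0 ≤ PW a x y)
    (hPT : ∀ x t, 0 ≤ PT x t) {x : X} {y : Y} {t : Strat Y Xh A}
    (h : pYTgivenX PW PT x y t ≠ 0) : pYT PX PW PT y t ≠ 0 := by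
  have hg : 0 < pYTgivenX PW PT x y t := (mul_nonneg (hPT x t) (hPW t.2 x y)).lt_of_ne' h
  have hxyt : 0 < pXYT PX PW PT x y t := by
    rw [pXYT_eq_mul_pYTgivenX]; exact mul_pos (hPX x) hg
  exact (hxyt.trans_le (pXYT_le_pYT (fun x => (hPX x).le) hPW hPT x y t)).ne'

lemma pA_isPMF (hPX : IsPMF PX) (hPT : IsCondPMF PT) : IsPMF (pA PX PT) :=
  ⟨pA_nonneg hPX.1 fun x => (hPT x).1, sum_pA hPX hPT⟩

lemma pTY_isPMF (hPX : IsPMF PX) (hPW : ∀ a x, IsPMF (PW a x)) (hPT : IsCondPMF PT) :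
    IsPMF (pTY PX PW PT) :=
  ⟨fun p => pYT_nonneg hPX.1 (fun a x => (hPW a x).1) (fun x => (hPT x).1) p.2 p.1,
    sum_pTY hPX hPW hPT⟩

lemma IXA_add_IXTcondYA_eq (hPX : ∀ x, 0 ≤ PX x) (hPW : ∀ a x, IsPMF (PW a x))
    (hPT : ∀ x t, 0 ≤ PT x t) :
    IXA PX PT + IXTcondYA PX PW PT
      = ∑ y, ∑ a, pYA PX PW PT y a * Real.logb 2 (pYA PX PW PT y a / pA PX PT a)
        - ∑ x, ∑ y, ∑ t, pXYT PX PW PT x y t * Real.logb 2 (PW t.2 x y)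
        + ∑ x, PX x * ∑ t, ∑ y, pYTgivenX PW PT x y t *
            Real.logb 2 (pYTgivenX PW PT x y t / pYT PX PW PT y t) := by
  have hPW' : ∀ a x y, 0 ≤ PW a x y := fun a x => (hPW a x).1
  have hS3 : ∀ x, PX x * ∑ t, ∑ y, pYTgivenX PW PT x y t *
        Real.logb 2 (pYTgivenX PW PT x y t / pYT PX PW PT y t)
      = ∑ y, ∑ t, pXYT PX PW PT x y t *
        Real.logb 2 (pYTgivenX PW PT x y t / pYT PX PW PT y t) := fun x => by
    simp only [mul_sum, pXYT_eq_mul_pYTgivenX, mul_assoc]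
    exact Finset.sum_comm
  simp only [IXA, IXTcondYA, sum_pXA_mul hPW, sum_pYA_mul, hS3, ← sum_add_distrib,
    ← sum_sub_distrib]
  refine sum_congr rfl fun x _ => sum_congr rfl fun y _ => sum_congr rfl fun t _ => ?_
  rcases (pXYT_nonneg hPX hPW' hPT x y t).eq_or_lt with hz | hpos
  · simp [← hz]
  obtain ⟨hxt, hw⟩ := mul_ne_zero_iff.1 (hpos.ne' : PX x * PT x t * PW t.2 x y ≠ 0)
  obtain ⟨hx, ht⟩ := mul_ne_zero_iff.1 hxt
  have hpXA : 0 < pXA PX PT x t.2 :=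
    (lt_of_le_of_ne (mul_nonneg (hPX x) (hPT x t)) hxt.symm).trans_le (mul_le_pXA hPX hPT x t)
  have hpA := hpXA.trans_le (pXA_le_pA hPX hPT x t.2)
  have hpYA := hpos.trans_le (pXYT_le_pYA hPX hPW' hPT x y t)
  have hpYT := hpos.trans_le (pXYT_le_pYT hPX hPW' hPT x y t)
  rw [pXYA_eq_mul_pXA]
  simp only [pXYT, pYTgivenX]
  linear_combination (PX x * PT x t * PW t.2 x y) *
    logb_chain_rule hx ht hw hpXA.ne' hpA.ne' hpYA.ne' hpYT.ne'

lemma sum_pYA_mul_logb_div_eq (hPX : ∀ x, 0 ≤ PX x) (hPW : ∀ a x, IsPMF (PW a x))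
    (hPT : ∀ x t, 0 ≤ PT x t) {QA : A → ℝ} (hQA : ∀ y a, pYA PX PW PT y a ≠ 0 → QA a ≠ 0) :
    ∑ y, ∑ a, pYA PX PW PT y a * Real.logb 2 (pYA PX PW PT y a / QA a)
      = ∑ y, ∑ a, pYA PX PW PT y a * Real.logb 2 (pYA PX PW PT y a / pA PX PT a)
        + relEntropy (pA PX PT) QA := by
  have hsplit : ∀ y a, pYA PX PW PT y a * Real.logb 2 (pYA PX PW PT y a / QA a)
      = pYA PX PW PT y a * Real.logb 2 (pYA PX PW PT y a / pA PX PT a)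
        + pYA PX PW PT y a * Real.logb 2 (pA PX PT a / QA a) :=
    fun y a => mul_logb_div_eq_add (hQA y a) (pA_ne_zero_of_pYA_ne_zero hPX hPW hPT)
  have hKL : ∑ y, ∑ a, pYA PX PW PT y a * Real.logb 2 (pA PX PT a / QA a)
      = relEntropy (pA PX PT) QA := by
    rw [relEntropy, Finset.sum_comm]
    simp only [← sum_mul, sum_pYA_eq_pA hPW]
  simp only [hsplit, sum_add_distrib, hKL]

lemma sum_mul_pYTgivenX_logb_div_eq (hPX : ∀ x, 0 < PX x) (hPW : ∀ a x y, 0 ≤ PW a x y)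
    (hPT : ∀ x t, 0 ≤ PT x t) {QTY : Strat Y Xh A × Y → ℝ}
    (hQTY : ∀ x y t, pYTgivenX PW PT x y t ≠ 0 → QTY (t, y) ≠ 0) :
    ∑ x, PX x * ∑ t, ∑ y, pYTgivenX PW PT x y t *
        Real.logb 2 (pYTgivenX PW PT x y t / QTY (t, y))
      = ∑ x, PX x * ∑ t, ∑ y, pYTgivenX PW PT x y t *
          Real.logb 2 (pYTgivenX PW PT x y t / pYT PX PW PT y t)
        + relEntropy (pTY PX PW PT) QTY := by
  have hsplit : ∀ x y t,
      pYTgivenX PW PT x y t * Real.logb 2 (pYTgivenX PW PT x y t / QTY (t, y))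
        = pYTgivenX PW PT x y t * Real.logb 2 (pYTgivenX PW PT x y t / pYT PX PW PT y t)
          + pYTgivenX PW PT x y t * Real.logb 2 (pYT PX PW PT y t / QTY (t, y)) :=
    fun x y t => mul_logb_div_eq_add (hQTY x y t) (pYT_ne_zero_of_pYTgivenX_ne_zero hPX hPW hPT)
  simp only [hsplit, sum_add_distrib, mul_add]
  congr 1
  rw [relEntropy, Fintype.sum_prod_type]
  simp only [pTY, mul_sum]
  rw [Finset.sum_comm]
  refine sum_congr rfl fun t _ => ?_
  rw [Finset.sum_comm]
  simp only [pYT, pXYT_eq_mul_pYTgivenX, sum_mul, mul_assoc]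

lemma relEntropy_pA_nonneg (hPX : IsPMF PX) (hPW : ∀ a x, IsPMF (PW a x)) (hPT : IsCondPMF PT)
    {QA : A → ℝ} (hQA : IsPMF QA) (hsupp : ∀ y a, pYA PX PW PT y a ≠ 0 → QA a ≠ 0) :
    0 ≤ relEntropy (pA PX PT) QA := by
  refine relEntropy_nonneg (pA_isPMF hPX hPT).1 hQA.1
    (by rw [hQA.2, sum_pA hPX hPT]) fun a ha => ?_
  rw [← sum_pYA_eq_pA hPW]
  exact sum_eq_zero fun y _ => by_contra fun h => hsupp y a h ha

lemma relEntropy_pTY_nonneg (hPX : IsPMF PX) (hPW : ∀ a x, IsPMF (PW a x)) (hPT : IsCondPMF PT)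
    {QTY : Strat Y Xh A × Y → ℝ} (hQTY : IsPMF QTY)
    (hsupp : ∀ x y t, pYTgivenX PW PT x y t ≠ 0 → QTY (t, y) ≠ 0) :
    0 ≤ relEntropy (pTY PX PW PT) QTY := by
  refine relEntropy_nonneg (pTY_isPMF hPX hPW hPT).1 hQTY.1
    (by rw [hQTY.2, sum_pTY hPX hPW hPT]) fun p hp => ?_
  simp only [pTY, pYT, pXYT_eq_mul_pYTgivenX]
  exact sum_eq_zero fun x _ => by rw [by_contra fun h => hsupp x p.2 p.1 h hp, mul_zero]

end Marginals

section Lagrangian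

variable {PX : X → ℝ} {PW : A → X → Y → ℝ} {dist : X → Xh → ℝ} {cost : A → ℝ} {s m : ℝ}
  {PT : X → Strat Y Xh A → ℝ} {QTY : Strat Y Xh A × Y → ℝ} {QA : A → ℝ}

lemma Ffun_eq_coe (hsuppA : ∀ y a, pYA PX PW PT y a ≠ 0 → QA a ≠ 0)
    (hsuppTY : ∀ x y t, pYTgivenX PW PT x y t ≠ 0 → QTY (t, y) ≠ 0) :
    Ffun PX PW dist cost s m PT QTY QA
      = ((∑ y, ∑ a, pYA PX PW PT y a * Real.logb 2 (pYA PX PW PT y a / QA a)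
          - ∑ x, ∑ y, ∑ t, pXYT PX PW PT x y t * Real.logb 2 (PW t.2 x y)
          + ∑ x, PX x * ∑ t, ∑ y, pYTgivenX PW PT x y t *
              Real.logb 2 (pYTgivenX PW PT x y t / QTY (t, y))
          - s * expDist PX PW dist PT - m * expCost PX cost PT : ℝ) : EReal) := by
  simp only [Ffun, klTerm_eq_coe (hsuppA _ _), klTerm_eq_coe (hsuppTY _ _ _),
    ← EReal.coe_finset_sum, ← EReal.coe_mul, ← EReal.coe_add]
  congr 1
  ring

theorem Ffun_eq_Jfun_add_relEntropy (hPX : ∀ x, 0 < PX x) (hPW : ∀ a x, IsPMF (PW a x))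
    (hPT : ∀ x t, 0 ≤ PT x t) (hsuppA : ∀ y a, pYA PX PW PT y a ≠ 0 → QA a ≠ 0)
    (hsuppTY : ∀ x y t, pYTgivenX PW PT x y t ≠ 0 → QTY (t, y) ≠ 0) :
    Ffun PX PW dist cost s m PT QTY QA
      = ((Jfun PX PW dist cost s m PT + relEntropy (pA PX PT) QA
          + relEntropy (pTY PX PW PT) QTY : ℝ) : EReal) := by
  have hPX' : ∀ x, 0 ≤ PX x := fun x => (hPX x).le
  rw [Ffun_eq_coe hsuppA hsuppTY, sum_pYA_mul_logb_div_eq hPX' hPW hPT hsuppA,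
    sum_mul_pYTgivenX_logb_div_eq hPX (fun a x => (hPW a x).1) hPT hsuppTY, Jfun,
    IXA_add_IXTcondYA_eq hPX' hPW hPT]
  congr 1
  ring

lemma Ffun_eq_top (hPX : ∀ x, 0 < PX x)
    (h : (∃ y a, pYA PX PW PT y a ≠ 0 ∧ QA a = 0) ∨
      ∃ x y t, pYTgivenX PW PT x y t ≠ 0 ∧ QTY (t, y) = 0) :
    Ffun PX PW dist cost s m PT QTY QA = ⊤ := by
  have hinner : ∀ x, ∑ t, ∑ y, klTerm (pYTgivenX PW PT x y t) (QTY (t, y)) ≠ ⊥ := fun x =>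
    EReal.sum_ne_bot fun t _ => EReal.sum_ne_bot fun y _ => klTerm_ne_bot _ _
  have hA : ∑ y, ∑ a, klTerm (pYA PX PW PT y a) (QA a) ≠ ⊥ :=
    EReal.sum_ne_bot fun y _ => EReal.sum_ne_bot fun a _ => klTerm_ne_bot _ _
  have hTY : ∑ x, (PX x : EReal) * ∑ t, ∑ y, klTerm (pYTgivenX PW PT x y t) (QTY (t, y)) ≠ ⊥ :=
    EReal.sum_ne_bot fun x _ => EReal.coe_mul_ne_bot (hPX x) (hinner x)
  rcases h with ⟨y, a, hp, hq⟩ | ⟨x, y, t, hp, hq⟩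
  · have htop : ∑ y, ∑ a, klTerm (pYA PX PW PT y a) (QA a) = ⊤ :=
      EReal.sum_eq_top (fun y _ => EReal.sum_ne_bot fun a _ => klTerm_ne_bot _ _) (mem_univ y)
        (EReal.sum_eq_top (fun a _ => klTerm_ne_bot _ _) (mem_univ a) (klTerm_eq_top hp hq))
    rw [Ffun, htop, EReal.top_add_of_ne_bot (EReal.coe_ne_bot _), EReal.top_add_of_ne_bot hTY,
      EReal.top_add_of_ne_bot (EReal.coe_ne_bot _)]
  · have hinner_top : ∑ t, ∑ y, klTerm (pYTgivenX PW PT x y t) (QTY (t, y)) = ⊤ :=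
      EReal.sum_eq_top (fun t _ => EReal.sum_ne_bot fun y _ => klTerm_ne_bot _ _) (mem_univ t)
        (EReal.sum_eq_top (fun y _ => klTerm_ne_bot _ _) (mem_univ y) (klTerm_eq_top hp hq))
    have htop : ∑ x, (PX x : EReal) * ∑ t, ∑ y, klTerm (pYTgivenX PW PT x y t) (QTY (t, y)) = ⊤ :=
      EReal.sum_eq_top (fun x _ => EReal.coe_mul_ne_bot (hPX x) (hinner x)) (mem_univ x)
        (by rw [hinner_top, EReal.coe_mul_top_of_pos (hPX x)])
    rw [Ffun, htop, EReal.add_top_of_ne_bot (EReal.add_ne_bot_iff.2 ⟨hA, EReal.coe_ne_bot _⟩),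
      EReal.top_add_of_ne_bot (EReal.coe_ne_bot _)]

theorem Jfun_le_Ffun (hPX : IsPMF PX) (hPXpos : ∀ x, 0 < PX x) (hPW : ∀ a x, IsPMF (PW a x))
    (hPT : IsCondPMF PT) (hQTY : IsPMF QTY) (hQA : IsPMF QA) :
    ((Jfun PX PW dist cost s m PT : ℝ) : EReal) ≤ Ffun PX PW dist cost s m PT QTY QA := by
  by_cases hsuppA : ∀ y a, pYA PX PW PT y a ≠ 0 → QA a ≠ 0
  · by_cases hsuppTY : ∀ x y t, pYTgivenX PW PT x y t ≠ 0 → QTY (t, y) ≠ 0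
    · rw [Ffun_eq_Jfun_add_relEntropy hPXpos hPW (fun x => (hPT x).1) hsuppA hsuppTY,
        EReal.coe_le_coe_iff]
      linarith [relEntropy_pA_nonneg hPX hPW hPT hQA hsuppA,
        relEntropy_pTY_nonneg hPX hPW hPT hQTY hsuppTY]
    · push Not at hsuppTY
      rw [Ffun_eq_top hPXpos (Or.inr hsuppTY)]
      exact le_top
  · push Not at hsuppA
    rw [Ffun_eq_top hPXpos (Or.inl hsuppA)]
    exact le_top

theorem Ffun_marginals_eq_Jfun (hPX : ∀ x, 0 < PX x) (hPW : ∀ a x, IsPMF (PW a x))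
    (hPT : ∀ x t, 0 ≤ PT x t) :
    Ffun PX PW dist cost s m PT (pTY PX PW PT) (pA PX PT)
      = ((Jfun PX PW dist cost s m PT : ℝ) : EReal) := by
  rw [Ffun_eq_Jfun_add_relEntropy hPX hPW hPT
    (fun _ _ => pA_ne_zero_of_pYA_ne_zero (fun x => (hPX x).le) hPW hPT)
    (fun _ _ _ => pYT_ne_zero_of_pYTgivenX_ne_zero hPX (fun a x => (hPW a x).1) hPT),
    relEntropy_self, relEntropy_self, add_zero, add_zero]

lemma sInf_Ffun_eq_of_le {Pstar : X → Strat Y Xh A → ℝ} (hPstar : IsCondPMF Pstar)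
    (hQTY : IsPMF QTY) (hQA : IsPMF QA)
    (hmin : ∀ PT QTY' QA', IsCondPMF PT → IsPMF QTY' → IsPMF QA' →
      Ffun PX PW dist cost s m Pstar QTY QA ≤ Ffun PX PW dist cost s m PT QTY' QA') :
    sInf { v : EReal | ∃ PT QTY' QA', IsCondPMF PT ∧ IsPMF QTY' ∧ IsPMF QA' ∧
        v = Ffun PX PW dist cost s m PT QTY' QA' } = Ffun PX PW dist cost s m Pstar QTY QA :=
  IsGLB.sInf_eq <| IsLeast.isGLB ⟨⟨Pstar, QTY, QA, hPstar, hQTY, hQA, rfl⟩,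
    by rintro _ ⟨PT, QTY', QA', hPT, hQTY', hQA', rfl⟩; exact hmin PT QTY' QA' hPT hQTY' hQA'⟩

theorem Jmin_eq_of_isMinOn {Pstar : X → Strat Y Xh A → ℝ} (hPstar : IsCondPMF Pstar)
    (hmin : IsMinOn (Jfun PX PW dist cost s m) {PT | IsCondPMF PT} Pstar) :
    Jmin PX PW dist cost s m = Jfun PX PW dist cost s m Pstar :=
  IsLeast.csInf_eq ⟨⟨Pstar, hPstar, rfl⟩, by rintro _ ⟨PT, hPT, rfl⟩; exact hmin hPT⟩

theorem RDC_eq_of_isMinOn_Jfun (hs : s ≤ 0) (hm : m ≤ 0) {Pstar : X → Strat Y Xh A → ℝ}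
    (hPstar : IsCondPMF Pstar)
    (hmin : IsMinOn (Jfun PX PW dist cost s m) {PT | IsCondPMF PT} Pstar) :
    RDC PX PW dist cost (expDist PX PW dist Pstar) (expCost PX cost Pstar)
      = IXA PX Pstar + IXTcondYA PX PW Pstar := by
  refine IsLeast.csInf_eq ⟨⟨Pstar, hPstar, le_rfl, le_rfl, rfl⟩, ?_⟩
  rintro _ ⟨PT, hPT, hD, hC, rfl⟩
  have hJ : Jfun PX PW dist cost s m Pstar ≤ Jfun PX PW dist cost s m PT := hmin hPT
  have := mul_le_mul_of_nonpos_left hD hs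
  have := mul_le_mul_of_nonpos_left hC hm
  simp only [Jfun] at hJ
  linarith

end Lagrangian

theorem RDC_as_triple_minimization_of_F_general
    {X Y A Xh : Type} [Fintype X] [Fintype Y] [Fintype A] [Fintype Xh]
    [DecidableEq X] [DecidableEq Y] [DecidableEq A] [DecidableEq Xh]
    (PX : X → ℝ) (PW : A → X → Y → ℝ) (dist : X → Xh → ℝ) (cost : A → ℝ)
    (hPX : IsPMF PX) (hPXpos : ∀ x, 0 < PX x)
    (hPW : ∀ a x, IsPMF (PW a x))
    (s m : ℝ) (hs : s ≤ 0) (hm : m ≤ 0)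
    (Pstar : X → Strat Y Xh A → ℝ) (hPstar : IsCondPMF Pstar)
    (hPstarMin : ∃ QTY : Strat Y Xh A × Y → ℝ, ∃ QA : A → ℝ,
      IsPMF QTY ∧ IsPMF QA ∧
      ∀ (PT' : X → Strat Y Xh A → ℝ) (QTY' : Strat Y Xh A × Y → ℝ) (QA' : A → ℝ),
        IsCondPMF PT' → IsPMF QTY' → IsPMF QA' →
          Ffun PX PW dist cost s m Pstar QTY QA ≤
            Ffun PX PW dist cost s m PT' QTY' QA') :
    sInf { v : EReal | ∃ PT : X → Strat Y Xh A → ℝ, ∃ QTY : Strat Y Xh A × Y → ℝ,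
        ∃ QA : A → ℝ, IsCondPMF PT ∧ IsPMF QTY ∧ IsPMF QA ∧
        v = Ffun PX PW dist cost s m PT QTY QA } =
      ((Jmin PX PW dist cost s m : ℝ) : EReal) ∧
    ((RDC PX PW dist cost (expDist PX PW dist Pstar) (expCost PX cost Pstar) : ℝ) : EReal)
      = ((s * expDist PX PW dist Pstar + m * expCost PX cost Pstar : ℝ) : EReal)
        + sInf { v : EReal | ∃ PT : X → Strat Y Xh A → ℝ,
            ∃ QTY : Strat Y Xh A × Y → ℝ, ∃ QA : A → ℝ,
            IsCondPMF PT ∧ IsPMF QTY ∧ IsPMF QA ∧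
            v = Ffun PX PW dist cost s m PT QTY QA } := by
  obtain ⟨QTY₀, QA₀, hQTY₀, hQA₀, hFmin⟩ := hPstarMin
  have hFstar_le : ∀ PT, IsCondPMF PT →
      Ffun PX PW dist cost s m Pstar QTY₀ QA₀ ≤ ((Jfun PX PW dist cost s m PT : ℝ) : EReal) :=
    fun PT hPT => (hFmin PT _ _ hPT (pTY_isPMF hPX hPW hPT) (pA_isPMF hPX hPT)).trans_eq
      (Ffun_marginals_eq_Jfun hPXpos hPW fun x => (hPT x).1)
  have hFstar :
      Ffun PX PW dist cost s m Pstar QTY₀ QA₀ = ((Jfun PX PW dist cost s m Pstar : ℝ) : EReal) :=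
    (hFstar_le Pstar hPstar).antisymm (Jfun_le_Ffun hPX hPXpos hPW hPstar hQTY₀ hQA₀)
  have hJmin : IsMinOn (Jfun PX PW dist cost s m) {PT | IsCondPMF PT} Pstar := fun PT hPT =>
    EReal.coe_le_coe_iff.1 (hFstar ▸ hFstar_le PT hPT)
  rw [sInf_Ffun_eq_of_le hPstar hQTY₀ hQA₀ hFmin, hFstar, Jmin_eq_of_isMinOn hPstar hJmin,
    RDC_eq_of_isMinOn_Jfun hs hm hPstar hJmin, ← EReal.coe_add, Jfun]
  exact ⟨rfl, congrArg _ (by ring)⟩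

/-- For any `s ≤ 0` and `m ≤ 0`, the triple minimization of `F` over
`P_{T|X}`, `Q_{T,Y}` and `Q_A` equals the minimization over `P_{T|X}` alone of
`I(X;a(T)) + I(X;T|Y,a(T)) − s E[d(X,T(Y))] − m E[Δ(a(T))]`, and
`R(D_{s,m}, C_{s,m}) = s D_{s,m} + m C_{s,m} + min F`. -/
theorem RDC_as_triple_minimization_of_F
    {X Y A Xh : Type} [Fintype X] [Fintype Y] [Fintype A] [Fintype Xh]
    [DecidableEq X] [DecidableEq Y] [DecidableEq A] [DecidableEq Xh]
    [Nonempty X] [Nonempty Y] [Nonempty A] [Nonempty Xh]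
    (PX : X → ℝ) (PW : A → X → Y → ℝ) (dist : X → Xh → ℝ) (cost : A → ℝ)
    (hPX : IsPMF PX) (hPXpos : ∀ x, 0 < PX x)
    (hPW : ∀ a x, IsPMF (PW a x))
    (hdist : ∀ x xh, 0 ≤ dist x xh) (hdist0 : ∀ x, ∃ xh, dist x xh = 0)
    (hcost : ∀ a, 0 ≤ cost a) (hcost0 : ∃ a, cost a = 0)
    (s m : ℝ) (hs : s ≤ 0) (hm : m ≤ 0)
    (Pstar : X → Strat Y Xh A → ℝ) (hPstar : IsCondPMF Pstar)
    (hPstarMin : ∃ QTY : Strat Y Xh A × Y → ℝ, ∃ QA : A → ℝ,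
      IsPMF QTY ∧ IsPMF QA ∧
      ∀ (PT' : X → Strat Y Xh A → ℝ) (QTY' : Strat Y Xh A × Y → ℝ) (QA' : A → ℝ),
        IsCondPMF PT' → IsPMF QTY' → IsPMF QA' →
          Ffun PX PW dist cost s m Pstar QTY QA ≤
            Ffun PX PW dist cost s m PT' QTY' QA') :
    sInf { v : EReal | ∃ PT : X → Strat Y Xh A → ℝ, ∃ QTY : Strat Y Xh A × Y → ℝ,
        ∃ QA : A → ℝ, IsCondPMF PT ∧ IsPMF QTY ∧ IsPMF QA ∧
        v = Ffun PX PW dist cost s m PT QTY QA } =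
      ((Jmin PX PW dist cost s m : ℝ) : EReal) ∧
    ((RDC PX PW dist cost (expDist PX PW dist Pstar) (expCost PX cost Pstar) : ℝ) : EReal)
      = ((s * expDist PX PW dist Pstar + m * expCost PX cost Pstar : ℝ) : EReal)
        + sInf { v : EReal | ∃ PT : X → Strat Y Xh A → ℝ,
            ∃ QTY : Strat Y Xh A × Y → ℝ, ∃ QA : A → ℝ,
            IsCondPMF PT ∧ IsPMF QTY ∧ IsPMF QA ∧
            v = Ffun PX PW dist cost s m PT QTY QA } :=
  RDC_as_triple_minimization_of_F_general PX PW dist cost hPX hPXpos hPW s m hs hm Pstar hPstar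
    hPstarMin
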